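/- Let L > 0 and let C_a > 0, γ > 0, c, B₀ be real parameters, and let φ : ℝ → ℝ be twice continuously differentiable. Suppose h, s, μ : ℝ × ℝ → ℝ are smooth functions satisfying, for all t and all x ∈ [0,L]: (i) ∂ₜh = (1/3)∂ₓ(h³ ∂ₓμ); (ii) μ = φ'(h) − (B₀/C_a)(h+s) − (1/C_a)∂ₓₓ(h+s); (iii) ∂ₜs = c² ∂ₓₓ s + (γ/C_a)(∂ₓₓ h + B₀ h) (i.e. the external force f is identically zero), with ∂ₓh = ∂ₓμ = ∂ₓs = 0 at x = 0 and x = L for all t. Assume moreover h(x,t) ≥ 0 for all x ∈ [0,L] and all t. Then the free energy E(t) = ∫₀ᴸ [ φ(h) − (B₀/(2C_a)) h² + (1/(2C_a)) (∂ₓh)² + (c²/(2γ)) (∂ₓs)² + (1/C_a)(∂ₓh · ∂ₓs − B₀ h s) ] dx is non-increasing in t, i.e. E(t₂) ≤ E(t₁) whenever t₁ ≤ t₂. -/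

import Mathlib

open MeasureTheory intervalIntegral

/-- Partial derivative in the first (spatial) variable. -/
noncomputable def pdx (u : ℝ × ℝ → ℝ) (x t : ℝ) : ℝ := deriv (fun y => u (y, t)) x

/-- Partial derivative in the second (time) variable. -/
noncomputable def pdt (u : ℝ × ℝ → ℝ) (x t : ℝ) : ℝ := deriv (fun τ => u (x, τ)) t

/-- Second partial derivative in the spatial variable. -/
noncomputable def pdxx (u : ℝ × ℝ → ℝ) (x t : ℝ) : ℝ := deriv (fun y => pdx u y t) x

/-- The total free energy of the thin-film / flexible-substrate system. -/
noncomputable def energy (L Ca γ c B0 : ℝ) (φ : ℝ → ℝ) (h s : ℝ × ℝ → ℝ) (τ : ℝ) : ℝ :=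
  ∫ x in (0:ℝ)..L,
    (φ (h (x, τ)) - (B0 / (2 * Ca)) * (h (x, τ))^2 + (1 / (2 * Ca)) * (pdx h x τ)^2
      + (c^2 / (2 * γ)) * (pdx s x τ)^2
      + (1 / Ca) * (pdx h x τ * pdx s x τ - B0 * h (x, τ) * s (x, τ)))

/-- directional partial derivative -/
noncomputable def Dv (v : ℝ × ℝ) (u : ℝ × ℝ → ℝ) (p : ℝ × ℝ) : ℝ := fderiv ℝ u p v

noncomputable abbrev DX := Dv (1, 0)
noncomputable abbrev DT := Dv (0, 1)

lemma contDiff_Dv {u : ℝ × ℝ → ℝ} (hu : ContDiff ℝ (⊤ : ℕ∞) u) (v : ℝ × ℝ) :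
    ContDiff ℝ (⊤ : ℕ∞) (Dv v u) := by
  have h1 : ContDiff ℝ (⊤ : ℕ∞) (fderiv ℝ u) := hu.fderiv_right (by simp)
  exact h1.clm_apply contDiff_const

lemma hasDerivAt_slice_x {u : ℝ × ℝ → ℝ} {x t : ℝ} (hu : DifferentiableAt ℝ u (x, t)) :
    HasDerivAt (fun y => u (y, t)) (DX u (x, t)) x := by
  have hline : HasDerivAt (fun y : ℝ => ((y, t) : ℝ × ℝ)) (((1 : ℝ), (0 : ℝ)) : ℝ × ℝ) x :=
    (hasDerivAt_id x).prodMk (hasDerivAt_const x t)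
  exact hu.hasFDerivAt.comp_hasDerivAt x hline

lemma hasDerivAt_slice_t {u : ℝ × ℝ → ℝ} {x t : ℝ} (hu : DifferentiableAt ℝ u (x, t)) :
    HasDerivAt (fun τ => u (x, τ)) (DT u (x, t)) t := by
  have hline : HasDerivAt (fun τ : ℝ => ((x, τ) : ℝ × ℝ)) (((0 : ℝ), (1 : ℝ)) : ℝ × ℝ) t :=
    (hasDerivAt_const t x).prodMk (hasDerivAt_id t)
  exact hu.hasFDerivAt.comp_hasDerivAt t hline

lemma pdx_eq {u : ℝ × ℝ → ℝ} (hu : Differentiable ℝ u) (x t : ℝ) :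
    pdx u x t = DX u (x, t) := (hasDerivAt_slice_x (hu _)).deriv

lemma pdt_eq {u : ℝ × ℝ → ℝ} (hu : Differentiable ℝ u) (x t : ℝ) :
    pdt u x t = DT u (x, t) := (hasDerivAt_slice_t (hu _)).deriv

/-- Clairaut / symmetry of second derivatives in directional form. -/
lemma Dv_comm {u : ℝ × ℝ → ℝ} (hu : ContDiff ℝ (⊤ : ℕ∞) u) (v w : ℝ × ℝ) (p : ℝ × ℝ) :
    Dv w (Dv v u) p = Dv v (Dv w u) p := by
  have hdu : Differentiable ℝ u := hu.differentiable (by simp)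
  have hfd : ContDiff ℝ (⊤ : ℕ∞) (fderiv ℝ u) := hu.fderiv_right (by simp)
  have hx : HasFDerivAt (fderiv ℝ u) (fderiv ℝ (fderiv ℝ u) p) p :=
    ((hfd.differentiable (by simp)) p).hasFDerivAt
  have hsymm := second_derivative_symmetric (fun y => (hdu y).hasFDerivAt) hx v w
  have key : ∀ a z : ℝ × ℝ, Dv a (Dv z u) p = fderiv ℝ (fderiv ℝ u) p a z := by
    intro a z
    have : HasFDerivAt (Dv z u)
        ((ContinuousLinearMap.apply ℝ ℝ z).comp (fderiv ℝ (fderiv ℝ u) p)) p :=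
      (ContinuousLinearMap.apply ℝ ℝ z).hasFDerivAt.comp p hx
    simp [Dv, this.fderiv]
  rw [key w v, key v w]
  exact hsymm.symm

/-- Differentiation under the interval integral for jointly continuous data. -/
lemma hasDerivAt_param_integral {F G : ℝ × ℝ → ℝ} (hF : Continuous F) (hG : Continuous G)
    (hd : ∀ x t : ℝ, HasDerivAt (fun τ => F (x, τ)) (G (x, t)) t) (a b t₀ : ℝ) :
    HasDerivAt (fun t => ∫ x in a..b, F (x, t)) (∫ x in a..b, G (x, t₀)) t₀ := by
  obtain ⟨C, hC⟩ : ∃ C, ∀ p ∈ (Set.uIcc a b) ×ˢ (Set.Icc (t₀ - 1) (t₀ + 1)), ‖G p‖ ≤ C :=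
    (isCompact_uIcc.prod isCompact_Icc).exists_bound_of_continuousOn hG.continuousOn
  have main := intervalIntegral.hasDerivAt_integral_of_dominated_loc_of_deriv_le
    (F := fun t x => F (x, t)) (F' := fun t x => G (x, t)) (x₀ := t₀)
    (a := a) (b := b) (μ := volume) (bound := fun _ => C) (s := Metric.ball t₀ 1) (Metric.ball_mem_nhds t₀ one_pos)
    (Filter.Eventually.of_forall fun t =>
      (hF.comp (continuous_id.prodMk continuous_const)).aestronglyMeasurable)
    ((hF.comp (continuous_id.prodMk continuous_const)).intervalIntegrable a b)
    ((hG.comp (continuous_id.prodMk continuous_const)).aestronglyMeasurable)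
    (Filter.Eventually.of_forall ?_)
    (intervalIntegrable_const)
    (Filter.Eventually.of_forall ?_)
  · exact main.2
  · intro x hx t ht
    refine hC (x, t) ⟨Set.uIoc_subset_uIcc hx, ?_⟩
    have := Metric.mem_ball.mp ht
    have := abs_sub_lt_iff.mp (by simpa [Real.dist_eq] using this)
    constructor <;> linarith [this.1, this.2]
  · intro x _ t _
    exact hd x t

/-- Integration by parts for slices, with vanishing boundary factor `U`. -/
lemma ibp_slice {U V : ℝ × ℝ → ℝ} (hU : ContDiff ℝ (⊤ : ℕ∞) U) (hV : ContDiff ℝ (⊤ : ℕ∞) V)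
    {L t : ℝ} (h0 : U (0, t) = 0) (hL : U (L, t) = 0) :
    ∫ x in (0:ℝ)..L, U (x, t) * DX V (x, t)
      = - ∫ x in (0:ℝ)..L, DX U (x, t) * V (x, t) := by
  have hdU : Differentiable ℝ U := hU.differentiable (by simp)
  have hdV : Differentiable ℝ V := hV.differentiable (by simp)
  have := intervalIntegral.integral_mul_deriv_eq_deriv_mul
      (a := (0:ℝ)) (b := L)
      (u := fun x => U (x, t)) (u' := fun x => DX U (x, t))
      (v := fun x => V (x, t)) (v' := fun x => DX V (x, t))
      (fun x _ => hasDerivAt_slice_x (hdU _)) (fun x _ => hasDerivAt_slice_x (hdV _))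
      (((contDiff_Dv hU _).continuous.comp
        (continuous_id.prodMk continuous_const)).intervalIntegrable 0 L)
      (((contDiff_Dv hV _).continuous.comp
        (continuous_id.prodMk continuous_const)).intervalIntegrable 0 L)
  rw [this, h0, hL]
  ring

/-- The energy density in directional-derivative form. -/
noncomputable def eDen (Ca γ c B0 : ℝ) (φ : ℝ → ℝ) (h s : ℝ × ℝ → ℝ) (p : ℝ × ℝ) : ℝ :=
  φ (h p) - (B0 / (2 * Ca)) * (h p)^2 + (1 / (2 * Ca)) * (DX h p)^2
    + (c^2 / (2 * γ)) * (DX s p)^2 + (1 / Ca) * (DX h p * DX s p - B0 * h p * s p)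

/-- Formal time derivative of the energy density. -/
noncomputable def eDenT (Ca γ c B0 : ℝ) (φ : ℝ → ℝ) (h s : ℝ × ℝ → ℝ) (p : ℝ × ℝ) : ℝ :=
  deriv φ (h p) * DT h p - (B0 / (2 * Ca)) * (2 * h p * DT h p)
    + (1 / (2 * Ca)) * (2 * DX h p * DT (DX h) p)
    + (c^2 / (2 * γ)) * (2 * DX s p * DT (DX s) p)
    + (1 / Ca) * ((DT (DX h) p * DX s p + DX h p * DT (DX s) p)
        - (B0 * DT h p * s p + B0 * h p * DT s p))

lemma hasDerivAt_eDen {Ca γ c B0 : ℝ} {φ : ℝ → ℝ} {h s : ℝ × ℝ → ℝ}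
    (hφ : ContDiff ℝ 2 φ) (hh : ContDiff ℝ (⊤ : ℕ∞) h) (hs : ContDiff ℝ (⊤ : ℕ∞) s) (x t : ℝ) :
    HasDerivAt (fun τ => eDen Ca γ c B0 φ h s (x, τ)) (eDenT Ca γ c B0 φ h s (x, t)) t := by
  have Hh := hasDerivAt_slice_t (hh.differentiable (by simp) (x, t))
  have Hs := hasDerivAt_slice_t (hs.differentiable (by simp) (x, t))
  have Hh1 := hasDerivAt_slice_t ((contDiff_Dv hh (1, 0)).differentiable (by simp) (x, t))
  have Hs1 := hasDerivAt_slice_t ((contDiff_Dv hs (1, 0)).differentiable (by simp) (x, t))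
  have Hφ : HasDerivAt φ (deriv φ (h (x, t))) (h (x, t)) :=
    (hφ.differentiable two_ne_zero _).hasDerivAt
  have T1 := Hφ.comp t Hh
  have T2 := Hh.pow 2
  have T3 := Hh1.pow 2
  have T4 := Hs1.pow 2
  have T5 := (Hh1.mul Hs1).sub ((Hh.const_mul B0).mul Hs)
  have T := (((T1.sub (T2.const_mul (B0 / (2 * Ca)))).add
      (T3.const_mul (1 / (2 * Ca)))).add
      (T4.const_mul (c^2 / (2 * γ)))).add (T5.const_mul (1 / Ca))
  have hval : eDenT Ca γ c B0 φ h s (x, t)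
      = deriv φ (h (x, t)) * DT h (x, t)
          - (B0 / (2 * Ca)) * ((2:ℕ) * h (x, t) ^ (2 - 1) * DT h (x, t))
          + (1 / (2 * Ca)) * ((2:ℕ) * DX h (x, t) ^ (2 - 1) * DT (DX h) (x, t))
          + (c^2 / (2 * γ)) * ((2:ℕ) * DX s (x, t) ^ (2 - 1) * DT (DX s) (x, t))
          + (1 / Ca) * ((DT (DX h) (x, t) * DX s (x, t) + DX h (x, t) * DT (DX s) (x, t))
              - ((B0 * DT h (x, t)) * s (x, t) + (B0 * h (x, t)) * DT s (x, t))) := by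
    unfold eDenT; push_cast; ring
  rw [hval]
  exact T

lemma pdxx_eq {u : ℝ × ℝ → ℝ} (hu : ContDiff ℝ (⊤ : ℕ∞) u) (x t : ℝ) :
    pdxx u x t = DX (DX u) (x, t) := by
  unfold pdxx
  rw [show (fun y => pdx u y t) = fun y => DX u (y, t) from
    funext fun y => pdx_eq (hu.differentiable (by simp)) y t]
  exact (hasDerivAt_slice_x ((contDiff_Dv hu _).differentiable (by simp) _)).deriv

lemma Dv_add {f g : ℝ × ℝ → ℝ} (hf : Differentiable ℝ f) (hg : Differentiable ℝ g)
    (v : ℝ × ℝ) (p : ℝ × ℝ) :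
    Dv v (fun q => f q + g q) p = Dv v f p + Dv v g p := by
  unfold Dv
  rw [fderiv_fun_add (hf p) (hg p)]
  rfl

/-- In the absence of external forcing (`f = 0`) and with nonnegative film height,
the total free energy of the thin-film / flexible-substrate system is
non-increasing in time. -/
theorem thin_film_energy_nonincreasing
    (L Ca γ c B0 : ℝ) (hL : 0 < L) (hCa : 0 < Ca) (hγ : 0 < γ)
    (φ : ℝ → ℝ) (hφ : ContDiff ℝ 2 φ)
    (h s μ : ℝ × ℝ → ℝ)
    (hh : ContDiff ℝ (⊤ : ℕ∞) h) (hs : ContDiff ℝ (⊤ : ℕ∞) s) (hμ : ContDiff ℝ (⊤ : ℕ∞) μ)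
    (eq1 : ∀ t : ℝ, ∀ x ∈ Set.Icc (0:ℝ) L,
      pdt h x t = (1/3) * deriv (fun y => (h (y, t))^3 * pdx μ y t) x)
    (eq2 : ∀ t : ℝ, ∀ x ∈ Set.Icc (0:ℝ) L,
      μ (x, t) = deriv φ (h (x, t)) - (B0 / Ca) * (h (x, t) + s (x, t))
        - (1 / Ca) * pdxx (fun p => h p + s p) x t)
    (eq3 : ∀ t : ℝ, ∀ x ∈ Set.Icc (0:ℝ) L,
      pdt s x t = c^2 * pdxx s x t + (γ / Ca) * (pdxx h x t + B0 * h (x, t)))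
    (bc : ∀ t : ℝ,
      pdx h 0 t = 0 ∧ pdx h L t = 0 ∧ pdx μ 0 t = 0 ∧ pdx μ L t = 0 ∧
      pdx s 0 t = 0 ∧ pdx s L t = 0)
    (hpos : ∀ t : ℝ, ∀ x ∈ Set.Icc (0:ℝ) L, 0 ≤ h (x, t)) :
    ∀ t₁ t₂ : ℝ, t₁ ≤ t₂ →
      energy L Ca γ c B0 φ h s t₂ ≤ energy L Ca γ c B0 φ h s t₁ := by
  have hdh : Differentiable ℝ h := hh.differentiable (by simp)
  have hds : Differentiable ℝ s := hs.differentiable (by simp)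
  have hdμ : Differentiable ℝ μ := hμ.differentiable (by simp)
  have hcφ : Continuous φ := hφ.continuous
  have hcφ' : Continuous (deriv φ) := hφ.continuous_deriv one_le_two
  have hch : Continuous h := hh.continuous
  have hcs : Continuous s := hs.continuous
  have hcμ : Continuous μ := hμ.continuous
  have hch1 : Continuous (DX h) := (contDiff_Dv hh _).continuous
  have hcs1 : Continuous (DX s) := (contDiff_Dv hs _).continuous
  have hcμ1 : Continuous (DX μ) := (contDiff_Dv hμ _).continuous
  have hch2 : Continuous (DT h) := (contDiff_Dv hh _).continuous
  have hcs2 : Continuous (DT s) := (contDiff_Dv hs _).continuous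
  have hch12 : Continuous (DT (DX h)) := (contDiff_Dv (contDiff_Dv hh _) _).continuous
  have hcs12 : Continuous (DT (DX s)) := (contDiff_Dv (contDiff_Dv hs _) _).continuous
  -- energy as the integral of `eDen`
  have energy_eq : (fun τ => energy L Ca γ c B0 φ h s τ)
      = fun τ => ∫ x in (0:ℝ)..L, eDen Ca γ c B0 φ h s (x, τ) := by
    funext τ
    unfold energy
    refine intervalIntegral.integral_congr fun x _ => ?_
    unfold eDen
    rw [pdx_eq hdh, pdx_eq hds]
  have hcF : Continuous (eDen Ca γ c B0 φ h s) := by unfold eDen; fun_prop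
  have hcG : Continuous (eDenT Ca γ c B0 φ h s) := by unfold eDenT; fun_prop
  have hE : ∀ t, HasDerivAt (fun τ => energy L Ca γ c B0 φ h s τ)
      (∫ x in (0:ℝ)..L, eDenT Ca γ c B0 φ h s (x, t)) t := by
    intro t
    rw [energy_eq]
    exact hasDerivAt_param_integral hcF hcG (fun x τ => hasDerivAt_eDen hφ hh hs x τ) 0 L t
  -- the dissipation estimate
  have hD : ∀ t, (∫ x in (0:ℝ)..L, eDenT Ca γ c B0 φ h s (x, t)) ≤ 0 := by
    intro t
    set Q : ℝ × ℝ → ℝ := fun p => (h p)^3 * DX μ p with hQdef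
    have hQs : ContDiff ℝ (⊤ : ℕ∞) Q := (hh.pow 3).mul (contDiff_Dv hμ _)
    have hcQ1 : Continuous (DX Q) := (contDiff_Dv hQs _).continuous
    set Z : ℝ × ℝ → ℝ := fun p =>
      (1/Ca) * (DX h p * DT h p) + (c^2/γ) * (DX s p * DT s p)
        + (1/Ca) * (DX s p * DT h p + DX h p * DT s p) with hZdef
    have hZs : ContDiff ℝ (⊤ : ℕ∞) Z := by
      exact ((contDiff_const.mul ((contDiff_Dv hh _).mul (contDiff_Dv hh _))).add
        (contDiff_const.mul ((contDiff_Dv hs _).mul (contDiff_Dv hs _)))).add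
        (contDiff_const.mul (((contDiff_Dv hs _).mul (contDiff_Dv hh _)).add
          ((contDiff_Dv hh _).mul (contDiff_Dv hs _))))
    have hcZ1 : Continuous (DX Z) := (contDiff_Dv hZs _).continuous
    obtain ⟨b1, b2, b3, b4, b5, b6⟩ := bc t
    have hbh0 : DX h (0, t) = 0 := by rw [← pdx_eq hdh]; exact b1
    have hbhL : DX h (L, t) = 0 := by rw [← pdx_eq hdh]; exact b2
    have hbμ0 : DX μ (0, t) = 0 := by rw [← pdx_eq hdμ]; exact b3
    have hbμL : DX μ (L, t) = 0 := by rw [← pdx_eq hdμ]; exact b4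
    have hbs0 : DX s (0, t) = 0 := by rw [← pdx_eq hds]; exact b5
    have hbsL : DX s (L, t) = 0 := by rw [← pdx_eq hds]; exact b6
    -- pointwise identity
    have claim1 : ∀ x ∈ Set.uIcc (0:ℝ) L, eDenT Ca γ c B0 φ h s (x, t)
        = ((1/3) * (μ (x, t) * DX Q (x, t)) - (1/γ) * (DT s (x, t))^2) + DX Z (x, t) := by
      intro x hx
      rw [Set.uIcc_of_le hL.le] at hx
      -- compute DX Z
      have Ah1 := hasDerivAt_slice_x ((contDiff_Dv hh (1,0)).differentiable (by simp) (x, t))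
      have As1 := hasDerivAt_slice_x ((contDiff_Dv hs (1,0)).differentiable (by simp) (x, t))
      have Ah2 := hasDerivAt_slice_x ((contDiff_Dv hh (0,1)).differentiable (by simp) (x, t))
      have As2 := hasDerivAt_slice_x ((contDiff_Dv hs (0,1)).differentiable (by simp) (x, t))
      have sym_h : DX (DT h) (x, t) = DT (DX h) (x, t) := Dv_comm hh (0,1) (1,0) (x, t)
      have sym_s : DX (DT s) (x, t) = DT (DX s) (x, t) := Dv_comm hs (0,1) (1,0) (x, t)
      have hDXZ : DX Z (x, t)
          = (1/Ca) * (DX (DX h) (x,t) * DT h (x,t) + DX h (x,t) * DT (DX h) (x,t))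
            + (c^2/γ) * (DX (DX s) (x,t) * DT s (x,t) + DX s (x,t) * DT (DX s) (x,t))
            + (1/Ca) * ((DX (DX s) (x,t) * DT h (x,t) + DX s (x,t) * DT (DX h) (x,t))
                + (DX (DX h) (x,t) * DT s (x,t) + DX h (x,t) * DT (DX s) (x,t))) := by
        have AZ : HasDerivAt (fun y => Z (y, t))
            ((1/Ca) * (DX (DX h) (x,t) * DT h (x,t) + DX h (x,t) * DX (DT h) (x,t))
              + (c^2/γ) * (DX (DX s) (x,t) * DT s (x,t) + DX s (x,t) * DX (DT s) (x,t))
              + (1/Ca) * ((DX (DX s) (x,t) * DT h (x,t) + DX s (x,t) * DX (DT h) (x,t))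
                  + (DX (DX h) (x,t) * DT s (x,t) + DX h (x,t) * DX (DT s) (x,t)))) x := by
          exact (((Ah1.mul Ah2).const_mul _).add ((As1.mul As2).const_mul _)).add
            (((As1.mul Ah2).add (Ah1.mul As2)).const_mul _)
        rw [← pdx_eq (hZs.differentiable (by simp)), pdx, AZ.deriv, sym_h, sym_s]
      -- the PDE relations
      have hxx_h : pdxx h x t = DX (DX h) (x, t) := pdxx_eq hh x t
      have hxx_s : pdxx s x t = DX (DX s) (x, t) := pdxx_eq hs x t
      have hxx_hs : pdxx (fun p => h p + s p) x t
          = DX (DX h) (x, t) + DX (DX s) (x, t) := by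
        rw [pdxx_eq (hh.add hs)]
        have e1 : DX (fun p => h p + s p) = fun p => DX h p + DX s p :=
          funext fun p => Dv_add hdh hds _ p
        rw [e1]
        exact Dv_add ((contDiff_Dv hh (1,0)).differentiable (by simp))
          ((contDiff_Dv hs (1,0)).differentiable (by simp)) (1,0) (x, t)
      have heq1 : DT h (x, t) = (1/3) * DX Q (x, t) := by
        rw [← pdt_eq hdh, eq1 t x hx]
        congr 1
        rw [show (fun y => (h (y, t))^3 * pdx μ y t) = fun y => Q (y, t) from
          funext fun y => by rw [pdx_eq hdμ, hQdef]]
        exact (hasDerivAt_slice_x (hQs.differentiable (by simp) _)).deriv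
      have heq3 : DT s (x, t)
          = c^2 * DX (DX s) (x, t) + (γ/Ca) * (DX (DX h) (x, t) + B0 * h (x, t)) := by
        rw [← pdt_eq hds, eq3 t x hx, hxx_s, hxx_h]
      have heq2 : μ (x, t) = deriv φ (h (x, t)) - (B0 / Ca) * (h (x, t) + s (x, t))
          - (1 / Ca) * (DX (DX h) (x, t) + DX (DX s) (x, t)) := by
        rw [eq2 t x hx, hxx_hs]
      unfold eDenT
      rw [hDXZ, heq2, heq1, heq3]
      field_simp
      ring
    rw [intervalIntegral.integral_congr claim1]
    have II : ∀ (U : ℝ → ℝ), Continuous U → IntervalIntegrable U volume 0 L :=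
      fun U hU => hU.intervalIntegrable 0 L
    have int1 : IntervalIntegrable
        (fun x => (1/3) * (μ (x, t) * DX Q (x, t)) - (1/γ) * (DT s (x, t))^2) volume 0 L :=
      II _ (by fun_prop)
    have int2 : IntervalIntegrable (fun x => DX Z (x, t)) volume 0 L := II _ (by fun_prop)
    rw [intervalIntegral.integral_add int1 int2]
    have hZ0 : (∫ x in (0:ℝ)..L, DX Z (x, t)) = 0 := by
      rw [intervalIntegral.integral_eq_sub_of_hasDerivAt
        (f := fun x => Z (x, t)) (f' := fun x => DX Z (x, t))
        (fun x _ => hasDerivAt_slice_x (hZs.differentiable (by simp) _)) int2]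
      rw [hZdef]
      simp [hbh0, hbhL, hbs0, hbsL]
    rw [hZ0, add_zero]
    rw [intervalIntegral.integral_sub (II _ (by fun_prop)) (II _ (by fun_prop)),
      intervalIntegral.integral_const_mul, intervalIntegral.integral_const_mul]
    have ibp := ibp_slice hQs hμ (L := L) (t := t)
      (by rw [hQdef]; simp [hbμ0]) (by rw [hQdef]; simp [hbμL])
    have hμQ : (∫ x in (0:ℝ)..L, μ (x, t) * DX Q (x, t))
        = - ∫ x in (0:ℝ)..L, Q (x, t) * DX μ (x, t) := by
      have e : (∫ x in (0:ℝ)..L, μ (x, t) * DX Q (x, t))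
          = ∫ x in (0:ℝ)..L, DX Q (x, t) * μ (x, t) :=
        intervalIntegral.integral_congr fun x _ => mul_comm _ _
      rw [e]; linarith [ibp]
    have hpos1 : 0 ≤ ∫ x in (0:ℝ)..L, Q (x, t) * DX μ (x, t) := by
      refine intervalIntegral.integral_nonneg hL.le fun x hx => ?_
      have hh0 := hpos t x hx
      rw [hQdef]
      simp only
      rw [mul_assoc]
      exact mul_nonneg (pow_nonneg hh0 3) (mul_self_nonneg _)
    have hpos2 : 0 ≤ ∫ x in (0:ℝ)..L, (DT s (x, t))^2 :=
      intervalIntegral.integral_nonneg hL.le fun x _ => sq_nonneg _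
    rw [hμQ]
    have c1 : (0:ℝ) < 1/γ := by positivity
    nlinarith [mul_nonneg c1.le hpos2]
  -- conclude by monotonicity
  have hdiff : Differentiable ℝ (fun τ => energy L Ca γ c B0 φ h s τ) :=
    fun t => (hE t).differentiableAt
  intro t₁ t₂ ht
  exact antitone_of_deriv_nonpos hdiff (fun t => by rw [(hE t).deriv]; exact hD t) ht
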